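/- arXiv:2311.08262 — 2 statements merged into one kernel-verified Lean document; each statement's English description precedes it below -/
import Mathlib

section
/- Let λ > 0, m ∈ ℝ with |m| < 1, and define g(w) = (1−w)^{−1+(1−m)/λ} (1+w)^{−1+(1+m)/λ} on (−1,1). Then g satisfies the stationary Fokker-Planck equation (γ w − γ m) g(w) + (σ²/2) d/dw[(1−w²) g(w)] = 0 for all w ∈ (−1,1), where λ = σ²/γ with γ, σ² > 0. -/
/-! Multiplying the Beta-type density by `1 - w² = (1 - w)(1 + w)` raises both exponents by one,
so the flux `(1 - w²) g` is `(1 - w)^p (1 + w)^q` with `p = (1 - m)/λ`, `q = (1 + m)/λ`. Its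
derivative is `g · (q (1 - w) - p (1 + w))`, and `(σ²/2)(q (1 - w) - p (1 + w)) = γ (m - w)`
exactly cancels the drift term. -/

open Real Set

section BetaFlux

variable (p q : ℝ) {w : ℝ}

lemma one_sub_sq_mul_rpow_mul_rpow (hw : w ∈ Ioo (-1 : ℝ) 1) :
    (1 - w ^ 2) * ((1 - w) ^ (-1 + p) * (1 + w) ^ (-1 + q)) = (1 - w) ^ p * (1 + w) ^ q := by
  have h₁ : 1 - w ≠ 0 := by linarith [hw.2]
  have h₂ : 1 + w ≠ 0 := by linarith [hw.1]
  rw [neg_add_eq_sub, neg_add_eq_sub, rpow_sub_one h₁, rpow_sub_one h₂]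
  field_simp
  ring

lemma hasDerivAt_one_sub_rpow_mul_one_add_rpow (hw : w ∈ Ioo (-1 : ℝ) 1) :
    HasDerivAt (fun v : ℝ => (1 - v) ^ p * (1 + v) ^ q)
      ((q * (1 - w) - p * (1 + w)) * ((1 - w) ^ (-1 + p) * (1 + w) ^ (-1 + q))) w := by
  have h₁ : 1 - w ≠ 0 := by linarith [hw.2]
  have h₂ : 1 + w ≠ 0 := by linarith [hw.1]
  have hd₁ : HasDerivAt (fun v : ℝ => (1 - v) ^ p) (-1 * p * (1 - w) ^ (p - 1)) w :=
    ((hasDerivAt_id w).const_sub 1).rpow_const (Or.inl h₁)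
  have hd₂ : HasDerivAt (fun v : ℝ => (1 + v) ^ q) (1 * q * (1 + w) ^ (q - 1)) w :=
    ((hasDerivAt_id w).const_add 1).rpow_const (Or.inl h₂)
  refine (hd₁.mul hd₂).congr_deriv ?_
  rw [neg_add_eq_sub, neg_add_eq_sub, rpow_sub_one h₁, rpow_sub_one h₂]
  field_simp
  ring

lemma deriv_one_sub_sq_mul_rpow_mul_rpow (hw : w ∈ Ioo (-1 : ℝ) 1) :
    deriv (fun v : ℝ => (1 - v ^ 2) * ((1 - v) ^ (-1 + p) * (1 + v) ^ (-1 + q))) w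
      = (q * (1 - w) - p * (1 + w)) * ((1 - w) ^ (-1 + p) * (1 + w) ^ (-1 + q)) := by
  have hflux : (fun v : ℝ => (1 - v ^ 2) * ((1 - v) ^ (-1 + p) * (1 + v) ^ (-1 + q)))
      =ᶠ[nhds w] fun v : ℝ => (1 - v) ^ p * (1 + v) ^ q := by
    filter_upwards [Ioo_mem_nhds hw.1 hw.2] with v hv
    exact one_sub_sq_mul_rpow_mul_rpow p q hv
  rw [hflux.deriv_eq]
  exact (hasDerivAt_one_sub_rpow_mul_one_add_rpow p q hw).deriv

end BetaFlux

theorem beta_steady_state_solves_FP_general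
    (γ σ2 m : ℝ) (hσ : 0 < σ2) :
    ∀ w ∈ Ioo (-1 : ℝ) 1,
      (γ * w - γ * m) *
          ((1 - w) ^ (-1 + (1 - m) / (σ2 / γ)) * (1 + w) ^ (-1 + (1 + m) / (σ2 / γ))) +
        σ2 / 2 *
          deriv (fun v : ℝ =>
            (1 - v ^ 2) *
              ((1 - v) ^ (-1 + (1 - m) / (σ2 / γ)) * (1 + v) ^ (-1 + (1 + m) / (σ2 / γ)))) w
        = 0 := by
  intro w hw
  rw [deriv_one_sub_sq_mul_rpow_mul_rpow _ _ hw]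
  set g := (1 - w) ^ (-1 + (1 - m) / (σ2 / γ)) * (1 + w) ^ (-1 + (1 + m) / (σ2 / γ))
  have hcancel : γ * w - γ * m
      + σ2 / 2 * ((1 + m) / (σ2 / γ) * (1 - w) - (1 - m) / (σ2 / γ) * (1 + w)) = 0 := by
    field_simp
    ring
  linear_combination g * hcancel

theorem beta_steady_state_solves_FP
    (γ σ2 m : ℝ) (hγ : 0 < γ) (hσ : 0 < σ2) (hm : |m| < 1) :
    ∀ w ∈ Ioo (-1 : ℝ) 1,
      (γ * w - γ * m) *
          ((1 - w) ^ (-1 + (1 - m) / (σ2 / γ)) * (1 + w) ^ (-1 + (1 + m) / (σ2 / γ))) +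
        σ2 / 2 *
          deriv (fun v : ℝ =>
            (1 - v ^ 2) *
              ((1 - v) ^ (-1 + (1 - m) / (σ2 / γ)) * (1 + v) ^ (-1 + (1 + m) / (σ2 / γ)))) w
        = 0 :=
  beta_steady_state_solves_FP_general γ σ2 m hσ
end

section
/- Consider the ODE system for local momenta with α = 0 and P ≡ 1: d/dt(ρ_S m_S) = −β ρ_I ρ_S m_S + (ρ_S/τ)(M − γ_S m_S), d/dt(ρ_E m_E) = β ρ_I ρ_S m_S − ν_E ρ_E m_E + (ρ_E/τ)(M − γ_E m_E), d/dt(ρ_I m_I) = ν_E ρ_E m_E − ν_I ρ_I m_I + (ρ_I/τ)(M − γ_I m_I), d/dt(ρ_R m_R) = ν_I ρ_I m_I + (ρ_R/τ)(M − γ_R m_R), where M = Σ_J γ_J ρ_J m_J and Σ_J ρ_J = 1. Then the total mean opinion Σ_J ρ_J m_J is constant in time. -/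
open Set

theorem total_mean_opinion_conserved_seir
    (ρS ρE ρI ρR mS mE mI mR : ℝ → ℝ)
    (β νE νI τ γS γE γI γR : ℝ)
    (hβ : 0 < β) (hνE : 0 < νE) (hνI : 0 < νI) (hτ : 0 < τ)
    (hγS : γS ∈ Ioo (0 : ℝ) 1) (hγE : γE ∈ Ioo (0 : ℝ) 1)
    (hγI : γI ∈ Ioo (0 : ℝ) 1) (hγR : γR ∈ Ioo (0 : ℝ) 1)
    (hmass : ∀ t, ρS t + ρE t + ρI t + ρR t = 1)
    (hS : ∀ t ≥ (0 : ℝ), HasDerivAt ρS (-β * ρS t * ρI t) t)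
    (hE : ∀ t ≥ (0 : ℝ), HasDerivAt ρE (β * ρS t * ρI t - νE * ρE t) t)
    (hI : ∀ t ≥ (0 : ℝ), HasDerivAt ρI (νE * ρE t - νI * ρI t) t)
    (hR : ∀ t ≥ (0 : ℝ), HasDerivAt ρR (νI * ρI t) t)
    (M : ℝ → ℝ)
    (hM : ∀ t, M t = γS * ρS t * mS t + γE * ρE t * mE t
                    + γI * ρI t * mI t + γR * ρR t * mR t)
    (hmS : ∀ t ≥ (0 : ℝ), HasDerivAt (fun s => ρS s * mS s)
      (-β * ρI t * ρS t * mS t + ρS t / τ * (M t - γS * mS t)) t)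
    (hmE : ∀ t ≥ (0 : ℝ), HasDerivAt (fun s => ρE s * mE s)
      (β * ρI t * ρS t * mS t - νE * ρE t * mE t + ρE t / τ * (M t - γE * mE t)) t)
    (hmI : ∀ t ≥ (0 : ℝ), HasDerivAt (fun s => ρI s * mI s)
      (νE * ρE t * mE t - νI * ρI t * mI t + ρI t / τ * (M t - γI * mI t)) t)
    (hmR : ∀ t ≥ (0 : ℝ), HasDerivAt (fun s => ρR s * mR s)
      (νI * ρI t * mI t + ρR t / τ * (M t - γR * mR t)) t) :
    ∀ t ≥ (0 : ℝ),
      ρS t * mS t + ρE t * mE t + ρI t * mI t + ρR t * mR t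
        = ρS 0 * mS 0 + ρE 0 * mE 0 + ρI 0 * mI 0 + ρR 0 * mR 0 := by

  intro t ht
  set F : ℝ → ℝ := fun s => ρS s * mS s + ρE s * mE s + ρI s * mI s + ρR s * mR s with hF
  have hderiv : ∀ x ∈ Ici (0:ℝ), HasDerivAt F 0 x := by
    intro x hx
    have hx0 : (0:ℝ) ≤ x := hx
    have h := (((hmS x hx0).add (hmE x hx0)).add (hmI x hx0)).add (hmR x hx0)
    have key : (-β * ρI x * ρS x * mS x + ρS x / τ * (M x - γS * mS x) +
        (β * ρI x * ρS x * mS x - νE * ρE x * mE x + ρE x / τ * (M x - γE * mE x)) +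
        (νE * ρE x * mE x - νI * ρI x * mI x + ρI x / τ * (M x - γI * mI x)) +
        (νI * ρI x * mI x + ρR x / τ * (M x - γR * mR x))) = 0 := by
      have hm : ρR x = 1 - ρS x - ρE x - ρI x := by linarith [hmass x]
      rw [hM x, hm]
      field_simp
      ring
    rw [key] at h
    exact h
  have hcont : ContinuousOn F (Icc 0 t) := fun x hx =>
    ((hderiv x hx.1).continuousAt).continuousWithinAt
  have := constant_of_has_deriv_right_zero hcont
    (fun x hx => ((hderiv x hx.1).hasDerivWithinAt))
    t (by exact ⟨ht, le_refl t⟩)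
  simpa using this
end
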